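/- In U(gl(3|1))[[t]] the deformed odd generators satisfy the anticommutation relations: 2t·{E₄₃, E₁₄} = T − T' (equivalently {E₄₃, E₁₄} = (1/(2t))(T − T'); note T − T' = 2t e₁₃), {E₃₄, E₄₃} = H₃₄ − (1/16)(T − T')² − (t/4)(T − T')E₁₄E₄₃, and {E₁₄, E₄₁} = H₁₄ + (1/16)(T − T')² + (t/4)(T − T')E₄₃E₁₄. -/

import Mathlib

/-!
Since `T - T' = 2 t e₁₃`, the square root `s` cancels, and both sides of each identity are
polynomials of degree at most two in the central variable `t`. The constant terms agree by the
defining relations for the odd generators. For the `t²` terms let `a = e₁₃` (that is, `e 0 2`)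
and let `b, c` be `e₁₄, e₄₃` in one order or the other: `a` commutes with `c`, `{b, c} = a`
and `h₁₃ c = c (h₁₃ + 1)`, so pushing `c` through `a b (2h₁₃ + 1)` gives
`{a b (2h₁₃ + 1), c} = a² (2h₁₃ + 1) + 2abc`.
-/
noncomputable section

namespace SuperJordanian

open scoped BigOperators

/-- The generalized binomial coefficient `C(1/2, n)`. -/
def cHalf (n : ℕ) : ℂ :=
  (∏ i ∈ Finset.range n, ((1 : ℂ) / 2 - (i : ℂ))) / (n.factorial : ℂ)

/-- Parity for `gl(3|1)`: `p(i,j) = 1` iff exactly one of `i`, `j` equals the fourth index. -/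
def par (i j : Fin 4) : ℕ :=
  if (i = 3 ∧ j ≠ 3) ∨ (i ≠ 3 ∧ j = 3) then 1 else 0

/-- The generator `e_{ij}` in the free algebra. -/
def gen (i j : Fin 4) : FreeAlgebra ℂ (Fin 4 × Fin 4) := FreeAlgebra.ι ℂ (i, j)

/-- Defining relations of the enveloping algebra `U(gl(3|1))`:
`e_{ij} e_{kl} - (-1)^{p(i,j)p(k,l)} e_{kl} e_{ij}
  = δ_{jk} e_{il} - (-1)^{p(i,j)p(k,l)} δ_{li} e_{kj}`. -/
inductive Rel : FreeAlgebra ℂ (Fin 4 × Fin 4) → FreeAlgebra ℂ (Fin 4 × Fin 4) → Prop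
  | mk (i j k l : Fin 4) :
      Rel (gen i j * gen k l - ((-1 : ℂ) ^ (par i j * par k l)) • (gen k l * gen i j))
        ((if j = k then gen i l else 0)
          - ((-1 : ℂ) ^ (par i j * par k l)) • (if l = i then gen k j else 0))

/-- The enveloping algebra `U = U(gl(3|1))`. -/
abbrev U : Type := RingQuot Rel

/-- The image of `e_{ij}` in `U`. -/
def e (i j : Fin 4) : U := RingQuot.mkAlgHom ℂ Rel (gen i j)

/-- The formal power series ring `U[[t]]`. -/
abbrev V : Type := PowerSeries U

/-- The central formal variable `t`. -/
def tv : V := PowerSeries.X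

/-- The inclusion `U → U[[t]]` as constant power series. -/
def C : U →+* V := PowerSeries.C (R := U)

def h₁₂ : U := e 0 0 - e 1 1
def h₂₃ : U := e 1 1 - e 2 2
def h₁₃ : U := e 0 0 - e 2 2
def h₃₄ : U := e 2 2 + e 3 3
def h₁₄ : U := e 0 0 + e 3 3

/-- `s = Σ_{n ≥ 0} C(1/2, n) t^{2n} e₁₃^{2n}`, so that `s² = 1 + t² e₁₃²`. -/
def s : V := PowerSeries.mk fun m => if m % 2 = 0 then cHalf (m / 2) • ((e 0 2) ^ m) else 0

def T : V := tv * C (e 0 2) + s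
def T' : V := -(tv * C (e 0 2)) + s
def H₁₃ : V := s * C h₁₃
def E₃₁ : V := C (e 2 0) - ((1 : ℂ) / 4) • (tv ^ 2 * C (e 0 2 * (h₁₃ ^ 2 - 1)))
def H₁₂ : V := C h₁₂ + ((1 : ℂ) / 2) • (tv ^ 2 * C ((e 0 2) ^ 2 * h₁₃))
def E₁₂ : V := C (e 0 1)
def E₂₁ : V := C (e 1 0) + ((1 : ℂ) / 4) • (tv ^ 2 * C (e 1 2 * e 0 2 * (2 * h₁₃ + 1)))
def H₂₃ : V := C h₂₃ + ((1 : ℂ) / 2) • (tv ^ 2 * C ((e 0 2) ^ 2 * h₁₃))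
def E₂₃ : V := C (e 1 2)
def E₃₂ : V := C (e 2 1) - ((1 : ℂ) / 4) • (tv ^ 2 * C (e 0 1 * e 0 2 * (2 * h₁₃ + 1)))
def H₃₄ : V := C h₃₄ - ((1 : ℂ) / 2) • (tv ^ 2 * C ((e 0 2) ^ 2 * h₁₃))
def E₃₄ : V := C (e 2 3) - ((1 : ℂ) / 4) • (tv ^ 2 * C (e 0 2 * e 0 3 * (2 * h₁₃ + 1)))
def E₄₃ : V := C (e 3 2)
def E₁₄ : V := C (e 0 3)
def E₄₁ : V := C (e 3 0) + ((1 : ℂ) / 4) • (tv ^ 2 * C (e 0 2 * e 3 2 * (2 * h₁₃ + 1)))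
def H₁₄ : V := C h₁₄ + ((1 : ℂ) / 2) • (tv ^ 2 * C ((e 0 2) ^ 2 * h₁₃))

/-- Commutator `[a, b] = ab - ba`. -/
def br (a b : V) : V := a * b - b * a

/-- Anticommutator `{a, b} = ab + ba`. -/
def ac (a b : V) : V := a * b + b * a

theorem e_mul_add_mul_of_odd {i j k l : Fin 4} (h : par i j * par k l = 1) :
    e i j * e k l + e k l * e i j
      = (if j = k then e i l else 0) + (if l = i then e k j else 0) := by
  have rel := RingQuot.mkAlgHom_rel ℂ (Rel.mk i j k l)
  simp only [h, pow_one, neg_one_smul, sub_neg_eq_add, map_add, map_mul,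
    apply_ite (RingQuot.mkAlgHom ℂ Rel), map_zero] at rel
  exact rel

theorem e_mul_sub_mul_of_even {i j k l : Fin 4} (h : par i j * par k l = 0) :
    e i j * e k l - e k l * e i j
      = (if j = k then e i l else 0) - (if l = i then e k j else 0) := by
  have rel := RingQuot.mkAlgHom_rel ℂ (Rel.mk i j k l)
  simp only [h, pow_zero, one_smul, map_sub, map_mul,
    apply_ite (RingQuot.mkAlgHom ℂ Rel), map_zero] at rel
  exact rel

theorem anticomm_e32_e03 : e 3 2 * e 0 3 + e 0 3 * e 3 2 = e 0 2 := by
  simpa using e_mul_add_mul_of_odd (i := 3) (j := 2) (k := 0) (l := 3) (by decide)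

theorem anticomm_e23_e32 : e 2 3 * e 3 2 + e 3 2 * e 2 3 = h₃₄ := by
  simpa [h₃₄] using e_mul_add_mul_of_odd (i := 2) (j := 3) (k := 3) (l := 2) (by decide)

theorem anticomm_e30_e03 : e 3 0 * e 0 3 + e 0 3 * e 3 0 = h₁₄ := by
  simpa [h₁₄, add_comm] using
    e_mul_add_mul_of_odd (i := 3) (j := 0) (k := 0) (l := 3) (by decide)

theorem commute_e02_e32 : Commute (e 0 2) (e 3 2) :=
  sub_eq_zero.mp <| by
    simpa using e_mul_sub_mul_of_even (i := 0) (j := 2) (k := 3) (l := 2) (by decide)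

theorem commute_e02_e03 : Commute (e 0 2) (e 0 3) :=
  sub_eq_zero.mp <| by
    simpa using e_mul_sub_mul_of_even (i := 0) (j := 2) (k := 0) (l := 3) (by decide)

theorem h₁₃_mul_e32 : h₁₃ * e 3 2 = e 3 2 * (h₁₃ + 1) := by
  have h₀ := e_mul_sub_mul_of_even (i := 0) (j := 0) (k := 3) (l := 2) (by decide)
  have h₂ := e_mul_sub_mul_of_even (i := 2) (j := 2) (k := 3) (l := 2) (by decide)
  simp only [Fin.reduceEq, if_false, if_true] at h₀ h₂
  rw [h₁₃, sub_mul, mul_add, mul_sub, mul_one]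
  linear_combination (norm := abel) h₀ - h₂

theorem h₁₃_mul_e03 : h₁₃ * e 0 3 = e 0 3 * (h₁₃ + 1) := by
  have h₀ := e_mul_sub_mul_of_even (i := 0) (j := 0) (k := 0) (l := 3) (by decide)
  have h₂ := e_mul_sub_mul_of_even (i := 2) (j := 2) (k := 0) (l := 3) (by decide)
  simp only [Fin.reduceEq, if_false, if_true] at h₀ h₂
  rw [h₁₃, sub_mul, mul_add, mul_sub, mul_one]
  linear_combination (norm := abel) h₀ - h₂

theorem anticomm_mul_mul_two_mul_add_one {R : Type*} [Ring R] {a b c h : R} (hac : Commute a c)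
    (hbc : b * c + c * b = a) (hhc : h * c = c * (h + 1)) :
    a * b * (2 * h + 1) * c + c * (a * b * (2 * h + 1))
      = 2 * (a ^ 2 * h) + a ^ 2 + 2 * (a * b * c) := by
  linear_combination (norm := noncomm_ring)
    2 * a * b * hhc - hac.eq * (b * (2 * h + 1)) + a * hbc * (2 * h + 1)

theorem tv_commute (v : V) : Commute tv v := (PowerSeries.commute_X v).symm

theorem ac_comm (a b : V) : ac a b = ac b a := add_comm _ _

theorem ac_add_left (a b c : V) : ac (a + b) c = ac a c + ac b c := by
  simp only [ac, add_mul, mul_add]; abel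

theorem ac_sub_left (a b c : V) : ac (a - b) c = ac a c - ac b c := by
  simp only [ac, sub_mul, mul_sub]; abel

theorem ac_smul_left (r : ℂ) (a b : V) : ac (r • a) b = r • ac a b := by
  simp only [ac, smul_mul_assoc, mul_smul_comm, smul_add]

theorem ac_tv_sq_mul_left (a b : V) : ac (tv ^ 2 * a) b = tv ^ 2 * ac a b := by
  rw [ac, ac, mul_add, mul_assoc, ← mul_assoc b, ← ((tv_commute b).pow_left 2).eq, mul_assoc]

theorem ac_C_C (x z : U) : ac (C x) (C z) = C (x * z + z * x) := by
  simp only [ac, map_add, map_mul]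

theorem T_sub_T' : T - T' = (2 : ℂ) • (tv * C (e 0 2)) := by
  rw [T, T', two_smul]; abel

theorem tv_mul_C_sq (a : U) : (tv * C a) ^ 2 = tv ^ 2 * C (a ^ 2) := by
  rw [(tv_commute _).mul_pow, map_pow]

theorem tv_mul_tv_mul_C_mul_C_mul_C (a b c : U) :
    tv * (tv * C a * C b * C c) = tv ^ 2 * C (a * b * c) := by
  simp only [map_mul, sq, mul_assoc]

theorem two_mul_tv_mul_ac_E₄₃_E₁₄ : 2 * tv * ac E₄₃ E₁₄ = T - T' := by
  rw [E₄₃, E₁₄, ac_C_C, anticomm_e32_e03, T_sub_T', two_smul, mul_assoc, two_mul]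

theorem ac_E₃₄_E₄₃ :
    ac E₃₄ E₄₃ = H₃₄ - ((1 : ℂ) / 16) • (T - T') ^ 2
      - ((1 : ℂ) / 4) • (tv * ((T - T') * E₁₄ * E₄₃)) := by
  have ht2 : e 0 2 * e 0 3 * (2 * h₁₃ + 1) * e 3 2 + e 3 2 * (e 0 2 * e 0 3 * (2 * h₁₃ + 1))
      = 2 * (e 0 2 ^ 2 * h₁₃) + e 0 2 ^ 2 + 2 * (e 0 2 * e 0 3 * e 3 2) :=
    anticomm_mul_mul_two_mul_add_one commute_e02_e32 ((add_comm _ _).trans anticomm_e32_e03)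
      h₁₃_mul_e32
  rw [E₃₄, E₄₃, ac_sub_left, ac_smul_left, ac_tv_sq_mul_left, ac_C_C, ac_C_C, anticomm_e23_e32,
    ht2, H₃₄, T_sub_T', smul_pow, tv_mul_C_sq, E₁₄, smul_mul_assoc, smul_mul_assoc,
    mul_smul_comm, tv_mul_tv_mul_C_mul_C_mul_C]
  -- `module` does not parse the subtraction of `PowerSeries U`, so it is turned into negation
  simp only [two_mul, map_add, mul_add, smul_add, sub_eq_add_neg]
  module

theorem ac_E₁₄_E₄₁ :
    ac E₁₄ E₄₁ = H₁₄ + ((1 : ℂ) / 16) • (T - T') ^ 2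
      + ((1 : ℂ) / 4) • (tv * ((T - T') * E₄₃ * E₁₄)) := by
  have ht2 : e 0 2 * e 3 2 * (2 * h₁₃ + 1) * e 0 3 + e 0 3 * (e 0 2 * e 3 2 * (2 * h₁₃ + 1))
      = 2 * (e 0 2 ^ 2 * h₁₃) + e 0 2 ^ 2 + 2 * (e 0 2 * e 3 2 * e 0 3) :=
    anticomm_mul_mul_two_mul_add_one commute_e02_e03 anticomm_e32_e03 h₁₃_mul_e03
  rw [ac_comm, E₄₁, E₁₄, ac_add_left, ac_smul_left, ac_tv_sq_mul_left, ac_C_C, ac_C_C,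
    anticomm_e30_e03, ht2, H₁₄, T_sub_T', smul_pow, tv_mul_C_sq, E₄₃, smul_mul_assoc,
    smul_mul_assoc, mul_smul_comm, tv_mul_tv_mul_C_mul_C_mul_C]
  simp only [two_mul, map_add, mul_add, smul_add]
  module

/-- anticommutation relations of the deformed odd generators of
`U(gl(3|1))[[t]]`. -/
theorem statement17 :
    2 * tv * ac E₄₃ E₁₄ = T - T' ∧
    ac E₃₄ E₄₃ = H₃₄ - ((1 : ℂ) / 16) • (T - T') ^ 2
        - ((1 : ℂ) / 4) • (tv * ((T - T') * E₁₄ * E₄₃)) ∧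
    ac E₁₄ E₄₁ = H₁₄ + ((1 : ℂ) / 16) • (T - T') ^ 2
        + ((1 : ℂ) / 4) • (tv * ((T - T') * E₄₃ * E₁₄)) :=
  ⟨two_mul_tv_mul_ac_E₄₃_E₁₄, ac_E₃₄_E₄₃, ac_E₁₄_E₄₁⟩

end SuperJordanian
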